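/- Let M be a monomial ideal with lcm-lattice L_M, and let m ≠ 1 in L_M. Suppose i₀ ≥ 0 is such that H̃_{i₀}(Δ_{m'}; k) = 0 for every m' ∈ L_M with 1 ≠ m' < m. Then H̃_j(Δ_m; k) = 0 for all j ≥ i₀ + 1. -/

import Mathlib

open scoped Classical

noncomputable section

/-- The faces of cardinality `c` of a simplicial complex `Δ` on vertex set `Fin r`
(encoded as a finite set of finite subsets of `Fin r`). -/
abbrev Face {r : ℕ} (Δ : Finset (Finset (Fin r))) (c : ℕ) : Type :=
  {s : Finset (Fin r) // s ∈ Δ ∧ s.card = c}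

/-- The incidence sign of a codimension-one pair of faces: `(−1)^{position}` if
`t ⊆ s`, and `0` otherwise. -/
def bdryCoef (k : Type*) [Field k] {r : ℕ} (s t : Finset (Fin r)) : k :=
  if t ⊆ s then (-1 : k) ^ ((s \ t).sum fun v => (s.filter fun w => w < v).card) else 0

/-- The boundary map of the (augmented, reduced) simplicial chain complex of `Δ` with
coefficients in `k`, from chains on faces of cardinality `c + 1` (dimension `c`) to
chains on faces of cardinality `c`. -/
def bdry (k : Type*) [Field k] {r : ℕ} (Δ : Finset (Finset (Fin r))) (c : ℕ) :
    (Face Δ (c + 1) → k) →ₗ[k] (Face Δ c → k) :=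
  LinearMap.pi fun t => ∑ s : Face Δ (c + 1), bdryCoef k s.1 t.1 • LinearMap.proj s

/-- Nonvanishing of the reduced homology `H̃_{c−1}(Δ; k)`, i.e. of the homology of the
reduced chain complex at the chains on faces of cardinality `c` (dimension `c − 1`). -/
def HtNonzero (k : Type*) [Field k] {r : ℕ} (Δ : Finset (Finset (Fin r))) : ℕ → Prop
  | 0 => LinearMap.range (bdry k Δ 0) ≠ ⊤
  | c + 1 => LinearMap.ker (bdry k Δ c) ≠ LinearMap.range (bdry k Δ (c + 1))

/-- The atom-support of a multidegree: the indices of generators dividing it. -/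
def aSupp {n r : ℕ} (a : Fin r → (Fin n → ℕ)) (v : Fin n → ℕ) : Finset (Fin r) :=
  Finset.univ.filter fun i => a i ≤ v

/-- The lcm-lattice of the monomial ideal generated by the monomials with exponent
vectors `a i`: all joins (componentwise sups) of subsets of the generators. -/
def latticeL {n r : ℕ} (a : Fin r → (Fin n → ℕ)) : Set (Fin n → ℕ) :=
  {v | ∃ A : Finset (Fin r), v = A.sup a}

/-- `u` is covered by `v` in the lcm-lattice. -/
def covIn {n r : ℕ} (a : Fin r → (Fin n → ℕ)) (u v : Fin n → ℕ) : Prop :=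
  u ∈ latticeL a ∧ u < v ∧ ∀ w ∈ latticeL a, ¬(u < w ∧ w < v)

/-- The simplicial complex `Δ_m` at `m ≠ 1` in the lcm-lattice: the complex whose
facets are the supports `A_{m'}` of the elements `m'` covered by `m` (this is `{∅}`
when `m` is an atom, since then the only covered element is the bottom `1`). -/
def deltaM {n r : ℕ} (a : Fin r → (Fin n → ℕ)) (m : Fin n → ℕ) :
    Finset (Finset (Fin r)) :=
  Finset.univ.filter fun s => ∃ u, covIn a u m ∧ s ⊆ aSupp a u

/-- The rank of `m` in the lcm-lattice: the maximal length of chains from the bottom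
element (exponent vector `0`, the monomial `1`) to `m`. -/
def rkOf {n r : ℕ} (a : Fin r → (Fin n → ℕ)) (m : Fin n → ℕ) : ℕ :=
  sSup {K : ℕ | ∃ c : Fin (K + 1) → (Fin n → ℕ),
    StrictMono c ∧ (∀ j, c j ∈ latticeL a) ∧ c 0 = 0 ∧ c (Fin.last K) = m}

end

/-!
A face lies in `Δ_m` iff the lcm of its generators is strictly below `m`, so `Δ_m` is the union
of the full simplices on `A_w` over all `w < m` in `L_M`. Glue these simplices in along a linear
extension of `L_M`: each new simplex meets the union of the earlier ones exactly in `Δ_w`, so by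
Mayer–Vietoris `H̃_j(Δ_m) = 0` as soon as `H̃_{j-1}(Δ_w) = 0` for all `w < m`. Induction on `m`
lifts the vanishing in degree `i₀` to all degrees `≥ i₀`.
-/

namespace SimplicialChains

open Finset

variable (k : Type*) [Field k] {r : ℕ}

lemma bdryCoef_insert_self {x : Fin r} {t : Finset (Fin r)} (hx : x ∉ t) :
    bdryCoef k (insert x t) t = (-1 : k) ^ #{w ∈ t | w < x} := by
  rw [bdryCoef, if_pos (subset_insert x t), insert_sdiff_cancel hx, sum_singleton,
    filter_insert, if_neg (lt_irrefl x)]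

lemma bdryCoef_mul_self {s t : Finset (Fin r)} (h : t ⊆ s) :
    bdryCoef k s t * bdryCoef k s t = 1 := by
  rw [bdryCoef, if_pos h, ← pow_add, ← two_mul, pow_mul, neg_one_sq, one_pow]

lemma bdryCoef_square {x y : Fin r} {t : Finset (Fin r)} (hx : x ∉ t) (hy : y ∉ t)
    (hxy : x ≠ y) :
    bdryCoef k (insert x t) t * bdryCoef k (insert x (insert y t)) (insert x t)
      + bdryCoef k (insert y t) t * bdryCoef k (insert x (insert y t)) (insert y t) = 0 := by
  have hy' : y ∉ insert x t := by simp [hy, hxy.symm]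
  have hx' : x ∉ insert y t := by simp [hx, hxy]
  rw [insert_comm x y t, bdryCoef_insert_self k hx, bdryCoef_insert_self k hy,
    bdryCoef_insert_self k hy', ← insert_comm x y t, bdryCoef_insert_self k hx',
    filter_insert, filter_insert]
  rcases hxy.lt_or_gt with h | h
  · rw [if_neg (asymm h), if_pos h, card_insert_of_notMem (fun hc => hx (mem_filter.1 hc).1)]
    ring
  · rw [if_pos h, if_neg (asymm h), card_insert_of_notMem (fun hc => hy (mem_filter.1 hc).1)]
    ring

/-- Chains are coefficient functions on all subsets of `Fin r`; this is the boundary of the full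
simplex, and the chains of a subcomplex are those supported on its faces. -/
def chainBdry : (Finset (Fin r) → k) →ₗ[k] (Finset (Fin r) → k) where
  toFun f t := ∑ x ∈ tᶜ, bdryCoef k (insert x t) t * f (insert x t)
  map_add' f g := by ext t; simp only [Pi.add_apply, mul_add, sum_add_distrib]
  map_smul' c f := by
    ext t; simp only [Pi.smul_apply, smul_eq_mul, mul_sum, mul_left_comm, RingHom.id_apply]

lemma chainBdry_apply (f : Finset (Fin r) → k) (t : Finset (Fin r)) :
    chainBdry k f t = ∑ x ∈ tᶜ, bdryCoef k (insert x t) t * f (insert x t) := rfl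

lemma chainBdry_chainBdry (f : Finset (Fin r) → k) : chainBdry k (chainBdry k f) = 0 := by
  ext t
  simp only [chainBdry_apply, compl_insert, mul_sum, Pi.zero_apply]
  rw [sum_sigma']
  refine sum_involution (fun p _ => ⟨p.2, p.1⟩) ?_ ?_ ?_ (fun _ _ => rfl)
  · rintro ⟨x, y⟩ hp
    simp only [mem_sigma, mem_erase, mem_compl] at hp
    obtain ⟨hx, hyx, hy⟩ := hp
    have hsq := bdryCoef_square k hy hx hyx
    rw [insert_comm y x t] at hsq ⊢
    linear_combination f (insert x (insert y t)) * hsq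
  · rintro ⟨x, y⟩ hp - h
    exact (mem_erase.1 (mem_sigma.1 hp).2).1 (congrArg Sigma.fst h)
  · rintro ⟨x, y⟩ hp
    simp only [mem_sigma, mem_erase, mem_compl] at hp ⊢
    exact ⟨hp.2.2, hp.2.1.symm, hp.1⟩

/-- The cone with apex `v`, sending a face `s ∌ v` to `± (insert v s)`. -/
def cone (v : Fin r) (f : Finset (Fin r) → k) (s : Finset (Fin r)) : k :=
  if v ∈ s then bdryCoef k s (s.erase v) * f (s.erase v) else 0

lemma chainBdry_cone_add_cone_chainBdry (v : Fin r) (f : Finset (Fin r) → k) :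
    chainBdry k (cone k v f) + cone k v (chainBdry k f) = f := by
  ext t
  simp only [Pi.add_apply, chainBdry_apply, cone]
  by_cases hv : v ∈ t
  · set t' := t.erase v
    have ht : insert v t' = t := insert_erase hv
    have hsq := bdryCoef_mul_self k (erase_subset v t)
    rw [if_pos hv, compl_erase, sum_insert (by simpa using hv), ht]
    have hterm : ∀ x ∈ tᶜ, bdryCoef k (insert x t) t * (if v ∈ insert x t then
        bdryCoef k (insert x t) ((insert x t).erase v) * f ((insert x t).erase v) else 0)
          = -(bdryCoef k t t' * (bdryCoef k (insert x t') t' * f (insert x t'))) := by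
      intro x hx
      have hxt : x ∉ t := mem_compl.1 hx
      have hxv : x ≠ v := fun h => hxt (h ▸ hv)
      have hsq' := bdryCoef_mul_self k (s := insert x t) (t := insert x t')
        (insert_subset_insert x (erase_subset v t))
      have hsquare := bdryCoef_square k (t := t') (fun h => hxt (mem_of_mem_erase h))
        (notMem_erase v t) hxv
      rw [ht] at hsquare
      have herase : (insert x t).erase v = insert x t' := erase_insert_of_ne hxv
      rw [if_pos (mem_insert_of_mem hv), herase]
      linear_combination (bdryCoef k t t' * bdryCoef k (insert x t) (insert x t')
          * f (insert x t')) * hsquare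
        - (bdryCoef k (insert x t) t * bdryCoef k (insert x t) (insert x t')
          * f (insert x t')) * hsq
        - (bdryCoef k t t' * bdryCoef k (insert x t') t' * f (insert x t')) * hsq'
    rw [sum_congr rfl hterm, sum_neg_distrib, mul_add, ← mul_sum]
    linear_combination f t * hsq
  · rw [if_neg hv, add_zero, sum_eq_single v (fun x _ hxv => by simp [hxv.symm, hv])
      (fun h => absurd (mem_compl.2 hv) h), if_pos (mem_insert_self v t), erase_insert hv]
    linear_combination f t * bdryCoef_mul_self k (subset_insert v t)

/-- Chains of the subcomplex `F` whose faces have cardinality `c` (dimension `c - 1`). -/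
def chainsOn (F : Set (Finset (Fin r))) (c : ℕ) : Submodule k (Finset (Fin r) → k) where
  carrier := {f | Function.support f ⊆ {s | s ∈ F ∧ s.card = c}}
  add_mem' hf hg := (Function.support_add _ _).trans (Set.union_subset hf hg)
  zero_mem' := by simp
  smul_mem' a _ hf := (Function.support_const_smul_subset a _).trans hf

/-- `F` has no reduced homology in dimension `c`, with faces of cardinality `c + 1`. -/
def IsAcyclicAt (F : Set (Finset (Fin r))) (c : ℕ) : Prop :=
  chainsOn k F (c + 1) ⊓ LinearMap.ker (chainBdry k) ≤ (chainsOn k F (c + 2)).map (chainBdry k)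

variable {k}

lemma mem_chainsOn {F : Set (Finset (Fin r))} {c : ℕ} {f : Finset (Fin r) → k} :
    f ∈ chainsOn k F c ↔ ∀ s, f s ≠ 0 → s ∈ F ∧ s.card = c := Iff.rfl

lemma chainsOn_mono {F G : Set (Finset (Fin r))} (h : F ⊆ G) (c : ℕ) :
    chainsOn k F c ≤ chainsOn k G c :=
  fun _ hf _ hs => ⟨h (hf hs).1, (hf hs).2⟩

lemma chainsOn_inter (F G : Set (Finset (Fin r))) (c : ℕ) :
    chainsOn k (F ∩ G) c = chainsOn k F c ⊓ chainsOn k G c := by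
  ext f
  simp only [Submodule.mem_inf, mem_chainsOn, Set.mem_inter_iff, ← forall_and]
  exact forall_congr' fun s => by tauto

lemma chainBdry_mem_chainsOn {F : Set (Finset (Fin r))} (hF : IsLowerSet F) {c : ℕ}
    {f : Finset (Fin r) → k} (hf : f ∈ chainsOn k F (c + 1)) :
    chainBdry k f ∈ chainsOn k F c := by
  intro t ht
  obtain ⟨x, hx, hfx⟩ := exists_ne_zero_of_sum_ne_zero ht
  obtain ⟨hxF, hcard⟩ := hf (right_ne_zero_of_mul hfx)
  rw [card_insert_of_notMem (mem_compl.1 hx)] at hcard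
  exact ⟨hF (subset_insert x t) hxF, by omega⟩

lemma isAcyclicAt_of_forall_card_ne {F : Set (Finset (Fin r))} {c : ℕ}
    (h : ∀ s ∈ F, s.card ≠ c + 1) : IsAcyclicAt k F c := by
  rintro f ⟨hf, -⟩
  have hf0 : f = 0 := funext fun s => by_contra fun hs => h s (hf hs).1 (hf hs).2
  exact hf0 ▸ zero_mem _

lemma cone_mem_chainsOn {v : Fin r} {B : Finset (Fin r)} (hv : v ∈ B) {c : ℕ}
    {f : Finset (Fin r) → k} (hf : f ∈ chainsOn k (Set.Iic B) (c + 1)) :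
    cone k v f ∈ chainsOn k (Set.Iic B) (c + 2) := by
  intro s hs
  simp only [Function.mem_support, cone, ne_eq, ite_eq_right_iff, not_forall] at hs
  obtain ⟨hvs, hfs⟩ := hs
  obtain ⟨hsB, hcard⟩ := hf (right_ne_zero_of_mul hfs)
  refine ⟨?_, by rw [← card_erase_add_one hvs, hcard]⟩
  rw [← insert_erase hvs]
  exact insert_subset hv hsB

variable (k)

lemma isAcyclicAt_Iic (B : Finset (Fin r)) (c : ℕ) : IsAcyclicAt k (Set.Iic B) c := by
  obtain rfl | ⟨v, hv⟩ := B.eq_empty_or_nonempty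
  · refine isAcyclicAt_of_forall_card_ne fun s hs => ?_
    simp_all
  · rintro f ⟨hf, hDf : chainBdry k f = 0⟩
    refine ⟨cone k v f, cone_mem_chainsOn hv hf, ?_⟩
    funext s
    simpa [hDf, cone] using congrFun (chainBdry_cone_add_cone_chainBdry k v f) s

/-- The Mayer–Vietoris argument, at the level of chains. -/
lemma isAcyclicAt_union {A B : Set (Finset (Fin r))} (hA : IsLowerSet A) (hB : IsLowerSet B)
    {c : ℕ} (hAc : IsAcyclicAt k A (c + 1)) (hBc : IsAcyclicAt k B (c + 1))
    (hABc : IsAcyclicAt k (A ∩ B) c) : IsAcyclicAt k (A ∪ B) (c + 1) := by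
  rintro f ⟨hf, hDf : chainBdry k f = 0⟩
  have hx : A.indicator f ∈ chainsOn k A (c + 2) := fun s hs =>
    ⟨Set.mem_of_indicator_ne_zero hs, (hf (fun h => hs (by simp [h]))).2⟩
  have hy : f - A.indicator f ∈ chainsOn k B (c + 2) := by
    intro s hs
    by_cases hsA : s ∈ A
    · simp [hsA] at hs
    · simp only [Function.mem_support, Pi.sub_apply, Set.indicator_of_notMem hsA, sub_zero] at hs
      exact ⟨((hf hs).1).resolve_left hsA, (hf hs).2⟩
  have hDx : chainBdry k (A.indicator f) ∈ chainsOn k (A ∩ B) (c + 1) := by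
    rw [chainsOn_inter]
    refine ⟨chainBdry_mem_chainsOn hA hx, ?_⟩
    have := neg_mem (chainBdry_mem_chainsOn hB hy)
    rwa [map_sub, hDf, zero_sub, neg_neg] at this
  obtain ⟨v, hv, hDv⟩ := hABc ⟨hDx, chainBdry_chainBdry k _⟩
  rw [chainsOn_inter] at hv
  obtain ⟨gA, hgA, hDgA⟩ := hAc ⟨sub_mem hx hv.1,
    LinearMap.mem_ker.2 (by rw [map_sub, hDv, sub_self])⟩
  obtain ⟨gB, hgB, hDgB⟩ := hBc ⟨add_mem hy hv.2,
    LinearMap.mem_ker.2 (by rw [map_add, map_sub, hDf, hDv, zero_sub, neg_add_cancel])⟩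
  refine ⟨gA + gB, add_mem (chainsOn_mono Set.subset_union_left _ hgA)
    (chainsOn_mono Set.subset_union_right _ hgB), ?_⟩
  rw [map_add, hDgA, hDgB]
  abel

section FaceChains

/-- A chain on the faces of `Δ` of cardinality `c`, seen as a chain of the full simplex. -/
noncomputable def faceExtend (Δ : Finset (Finset (Fin r))) (c : ℕ) :
    (Face Δ c → k) →ₗ[k] (Finset (Fin r) → k) :=
  Function.ExtendByZero.linearMap k Subtype.val

variable {k} {Δ : Finset (Finset (Fin r))} {c : ℕ}

lemma faceExtend_apply_val (f : Face Δ c → k) (S : Face Δ c) :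
    faceExtend k Δ c f S.1 = f S :=
  Subtype.val_injective.extend_apply f 0 S

lemma faceExtend_apply_of_notMem (f : Face Δ c → k) {s : Finset (Fin r)}
    (hs : ¬(s ∈ Δ ∧ s.card = c)) : faceExtend k Δ c f s = 0 :=
  Function.extend_apply' _ _ _ fun ⟨S, hS⟩ => hs (hS ▸ S.2)

lemma faceExtend_injective : Function.Injective (faceExtend k Δ c) :=
  Function.extend_injective Subtype.val_injective (0 : Finset (Fin r) → k)

lemma range_faceExtend : LinearMap.range (faceExtend k Δ c) = chainsOn k Δ c := by
  ext g
  constructor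
  · rintro ⟨f, rfl⟩ s hs
    by_contra h
    exact hs (faceExtend_apply_of_notMem f h)
  · intro hg
    refine ⟨fun S => g S.1, funext fun s => ?_⟩
    by_cases hs : s ∈ Δ ∧ s.card = c
    · exact faceExtend_apply_val (Δ := Δ) _ ⟨s, hs⟩
    · rw [faceExtend_apply_of_notMem _ hs, eq_comm]
      exact by_contra fun h => hs (hg h)

lemma bdry_apply (f : Face Δ (c + 1) → k) (t : Face Δ c) :
    bdry k Δ c f t = ∑ S : Face Δ (c + 1), bdryCoef k S.1 t.1 * f S := by
  simp [bdry]

lemma faceExtend_bdry (hΔ : IsLowerSet (Δ : Set (Finset (Fin r)))) (f : Face Δ (c + 1) → k) :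
    faceExtend k Δ c (bdry k Δ c f) = chainBdry k (faceExtend k Δ (c + 1) f) := by
  ext s
  rw [chainBdry_apply]
  by_cases hs : s ∈ Δ ∧ s.card = c
  · rw [show faceExtend k Δ c (bdry k Δ c f) s = bdry k Δ c f ⟨s, hs⟩ from
      faceExtend_apply_val _ ⟨s, hs⟩, bdry_apply]
    symm
    refine sum_bij_ne_zero (fun x _ hne => ⟨insert x s, by_contra fun h =>
        right_ne_zero_of_mul hne (faceExtend_apply_of_notMem f h)⟩) (fun _ _ _ => mem_univ _)
      (fun x hx _ y _ _ h => (insert_inj (mem_compl.1 hx)).1 (congrArg Subtype.val h))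
      (fun S _ hS => ?_) (fun x _ _ => congrArg _ (faceExtend_apply_val f ⟨insert x s, _⟩))
    have hsS : s ⊆ S.1 := by_contra fun h => left_ne_zero_of_mul hS (if_neg h)
    obtain ⟨x, hx, hxS⟩ := exists_eq_insert_iff.2 ⟨hsS, by rw [hs.2, S.2.2]⟩
    refine ⟨x, mem_compl.2 hx, ?_, Subtype.ext hxS⟩
    rwa [hxS, faceExtend_apply_val]
  · rw [faceExtend_apply_of_notMem _ hs]
    refine (sum_eq_zero fun x hx => ?_).symm
    rw [faceExtend_apply_of_notMem, mul_zero]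
    rintro ⟨hxΔ, hcard⟩
    rw [card_insert_of_notMem (mem_compl.1 hx)] at hcard
    exact hs ⟨hΔ (subset_insert x s) hxΔ, by omega⟩

lemma faceExtend_comp_bdry (hΔ : IsLowerSet (Δ : Set (Finset (Fin r)))) :
    faceExtend k Δ c ∘ₗ bdry k Δ c = chainBdry k ∘ₗ faceExtend k Δ (c + 1) :=
  LinearMap.ext (faceExtend_bdry hΔ)

variable (k) in
lemma ker_bdry_eq_range_bdry_iff (hΔ : IsLowerSet (Δ : Set (Finset (Fin r)))) (c : ℕ) :
    LinearMap.ker (bdry k Δ c) = LinearMap.range (bdry k Δ (c + 1)) ↔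
      IsAcyclicAt k (Δ : Set (Finset (Fin r))) c := by
  have hker : LinearMap.ker (bdry k Δ c)
      = (LinearMap.ker (chainBdry k)).comap (faceExtend k Δ (c + 1)) := by
    rw [← LinearMap.ker_comp, ← faceExtend_comp_bdry hΔ,
      LinearMap.ker_comp_of_ker_eq_bot _ (LinearMap.ker_eq_bot.2 faceExtend_injective)]
  have hrange_le_ker : LinearMap.range (bdry k Δ (c + 1)) ≤ LinearMap.ker (bdry k Δ c) := by
    rintro _ ⟨f, rfl⟩
    apply faceExtend_injective
    rw [faceExtend_bdry hΔ, faceExtend_bdry hΔ, chainBdry_chainBdry, map_zero]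
  rw [le_antisymm_iff, and_iff_left hrange_le_ker, ← Submodule.map_le_map_iff_of_injective
    faceExtend_injective, hker, Submodule.map_comap_eq, range_faceExtend,
    ← LinearMap.range_comp, faceExtend_comp_bdry hΔ, LinearMap.range_comp, range_faceExtend]
  rfl

end FaceChains

end SimplicialChains

namespace LcmLattice

open Finset SimplicialChains

variable (k : Type*) [Field k] {n r : ℕ} (a : Fin r → (Fin n → ℕ))

lemma latticeL_finite : (latticeL a).Finite :=
  (Set.finite_range fun A : Finset (Fin r) => A.sup a).subset fun _ ⟨A, hA⟩ => ⟨A, hA.symm⟩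

lemma sup_mem_latticeL (s : Finset (Fin r)) : s.sup a ∈ latticeL a := ⟨s, rfl⟩

lemma exists_covIn_of_lt {v m : Fin n → ℕ} (hv : v ∈ latticeL a) (hvm : v < m) :
    ∃ u, covIn a u m ∧ v ≤ u := by
  obtain ⟨u, hvu, hu⟩ := ((latticeL_finite a).sep (· < m)).exists_le_maximal ⟨hv, hvm⟩
  exact ⟨u, ⟨hu.prop.1, hu.prop.2, fun w hw ⟨huw, hwm⟩ => hu.not_gt ⟨hw, hwm⟩ huw⟩, hvu⟩

lemma coe_deltaM (m : Fin n → ℕ) :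
    (deltaM a m : Set (Finset (Fin r))) = {s | s.sup a < m} := by
  ext s
  simp only [deltaM, coe_filter, mem_univ, true_and, Set.mem_ofPred_eq]
  constructor
  · rintro ⟨u, hu, hsu⟩
    refine lt_of_le_of_lt (Finset.sup_le fun i hi => ?_) hu.2.1
    exact (mem_filter.1 (hsu hi)).2
  · intro hs
    obtain ⟨u, hu, hsu⟩ := exists_covIn_of_lt a (sup_mem_latticeL a s) hs
    exact ⟨u, hu, fun i hi => mem_filter.2 ⟨mem_univ i, (le_sup hi).trans hsu⟩⟩

lemma isLowerSet_deltaM (m : Fin n → ℕ) : IsLowerSet (deltaM a m : Set (Finset (Fin r))) := by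
  rw [coe_deltaM]
  exact fun s t hts (hs : s.sup a < m) => show t.sup a < m from (sup_mono hts).trans_lt hs

lemma setOf_sup_le_eq_Iic (w : Fin n → ℕ) :
    {s : Finset (Fin r) | s.sup a ≤ w} = Set.Iic (aSupp a w) := by
  ext s
  simp [Finset.sup_le_iff, subset_iff, aSupp]

lemma isAcyclicAt_biUnion_sup_le (c : ℕ) (V : Finset (Fin n → ℕ))
    (hV : ∀ w ∈ V, ∀ v ∈ latticeL a, v ≤ w → v ∈ V)
    (hVc : ∀ w ∈ V, IsAcyclicAt k {s | s.sup a < w} c) :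
    IsAcyclicAt k (⋃ w ∈ V, {s | s.sup a ≤ w}) (c + 1) := by
  induction V using Finset.strongInduction with
  | H V ih =>
  obtain rfl | hne := V.eq_empty_or_nonempty
  · exact isAcyclicAt_of_forall_card_ne (by simp)
  obtain ⟨w, hw⟩ := V.exists_maximal hne
  have hrest : IsAcyclicAt k (⋃ w' ∈ V.erase w, {s | s.sup a ≤ w'}) (c + 1) := by
    refine ih _ (erase_ssubset hw.prop) (fun w' hw' v hv hvw' => mem_erase.2 ⟨?_, ?_⟩)
      (fun w' hw' => hVc w' (mem_of_mem_erase hw'))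
    · rintro rfl
      exact (mem_erase.1 hw').1 (hw.eq_of_le (mem_of_mem_erase hw') hvw').symm
    · exact hV w' (mem_of_mem_erase hw') v hv hvw'
  have hunion : ⋃ w' ∈ V, {s : Finset (Fin r) | s.sup a ≤ w'}
      = {s | s.sup a ≤ w} ∪ ⋃ w' ∈ V.erase w, {s | s.sup a ≤ w'} := by
    conv_lhs => rw [← insert_erase hw.prop, set_biUnion_insert]
  have hinter : {s : Finset (Fin r) | s.sup a ≤ w} ∩ ⋃ w' ∈ V.erase w, {s | s.sup a ≤ w'}
      = {s | s.sup a < w} := by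
    ext s
    simp only [Set.mem_inter_iff, Set.mem_iUnion, Set.mem_ofPred_eq, mem_erase, exists_prop]
    constructor
    · rintro ⟨hsw, w', ⟨hw'w, hw'V⟩, hsw'⟩
      refine lt_of_le_of_ne hsw fun h => hw'w ?_
      exact (hw.eq_of_le hw'V (h ▸ hsw')).symm
    · intro hs
      exact ⟨hs.le, s.sup a, ⟨hs.ne, hV w hw.prop _ (sup_mem_latticeL a s) hs.le⟩, le_rfl⟩
  rw [setOf_sup_le_eq_Iic] at hunion hinter
  rw [hunion]
  refine isAcyclicAt_union k (isLowerSet_Iic _) (isLowerSet_iUnion₂ fun w' _ => ?_)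
    (isAcyclicAt_Iic k _ _) hrest (hinter ▸ hVc w hw.prop)
  rw [setOf_sup_le_eq_Iic]
  exact isLowerSet_Iic _

lemma isAcyclicAt_setOf_sup_lt (i₀ : ℕ) (m : Fin n → ℕ)
    (h : ∀ m' ∈ latticeL a, m' ≠ 0 → m' < m → IsAcyclicAt k {s | s.sup a < m'} i₀) :
    ∀ c, i₀ ≤ c → IsAcyclicAt k {s | s.sup a < m} (c + 1) := by
  induction m using WellFoundedLT.induction with
  | _ m ih =>
  intro c hc
  set V := (latticeL_finite a).toFinset.filter (· < m)
  have hmemV : ∀ w, w ∈ V ↔ w ∈ latticeL a ∧ w < m := by simp [V]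
  have hΔ : {s : Finset (Fin r) | s.sup a < m} = ⋃ w ∈ V, {s | s.sup a ≤ w} := by
    ext s
    simp only [Set.mem_ofPred_eq, Set.mem_iUnion, hmemV, exists_prop]
    exact ⟨fun hs => ⟨s.sup a, ⟨sup_mem_latticeL a s, hs⟩, le_rfl⟩,
      fun ⟨w, ⟨_, hwm⟩, hsw⟩ => hsw.trans_lt hwm⟩
  rw [hΔ]
  refine isAcyclicAt_biUnion_sup_le k a c V
    (fun w hw v hv hvw => (hmemV v).2 ⟨hv, hvw.trans_lt ((hmemV w).1 hw).2⟩) fun w hw => ?_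
  obtain ⟨hwL, hwm⟩ := (hmemV w).1 hw
  by_cases hw0 : w = 0
  · subst hw0
    exact isAcyclicAt_of_forall_card_ne fun s (hs : s.sup a < 0) =>
      absurd hs (not_lt_of_ge fun _ => Nat.zero_le _)
  obtain rfl | hc' := hc.eq_or_lt
  · exact h w hwL hw0 hwm
  obtain ⟨c', rfl⟩ : ∃ c', c = c' + 1 := ⟨c - 1, by omega⟩
  exact ih w hwm (fun m' h1 h2 h3 => h m' h1 h2 (h3.trans hwm)) c' (by omega)

end LcmLattice

open SimplicialChains LcmLattice

theorem reduced_homology_vanishes_above_general (k : Type*) [Field k] {n r : ℕ}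
    (a : Fin r → (Fin n → ℕ))
    (m : Fin n → ℕ)
    (i₀ : ℕ)
    (h : ∀ m', m' ∈ latticeL a → m' ≠ 0 → m' < m →
      LinearMap.ker (bdry k (deltaM a m') i₀)
        = LinearMap.range (bdry k (deltaM a m') (i₀ + 1))) :
    ∀ j : ℕ, i₀ + 1 ≤ j →
      LinearMap.ker (bdry k (deltaM a m) j)
        = LinearMap.range (bdry k (deltaM a m) (j + 1)) := by
  intro j hj
  obtain ⟨c, rfl⟩ : ∃ c, j = c + 1 := ⟨j - 1, by omega⟩
  rw [ker_bdry_eq_range_bdry_iff k (isLowerSet_deltaM a m), coe_deltaM]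
  refine isAcyclicAt_setOf_sup_lt k a i₀ m (fun m' hm'L hm'0 hm'm => ?_) c (by omega)
  rw [← coe_deltaM, ← ker_bdry_eq_range_bdry_iff k (isLowerSet_deltaM a m')]
  exact h m' hm'L hm'0 hm'm

/-- Let `M` be a monomial ideal (generators encoded by exponent
vectors `a`, minimally generating) with lcm-lattice `L_M`, and let `m ≠ 1` in `L_M`.
Suppose `i₀ ≥ 0` is such that `H̃_{i₀}(Δ_{m'}; k) = 0` for every `m' ∈ L_M` with
`1 ≠ m' < m`.  Then `H̃_j(Δ_m; k) = 0` for all `j ≥ i₀ + 1`. -/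
theorem reduced_homology_vanishes_above (k : Type*) [Field k] {n r : ℕ}
    (a : Fin r → (Fin n → ℕ)) (hmin : ∀ i j, i ≠ j → ¬ a i ≤ a j)
    (m : Fin n → ℕ) (hmL : m ∈ latticeL a) (hm0 : m ≠ 0)
    (i₀ : ℕ)
    (h : ∀ m', m' ∈ latticeL a → m' ≠ 0 → m' < m →
      LinearMap.ker (bdry k (deltaM a m') i₀)
        = LinearMap.range (bdry k (deltaM a m') (i₀ + 1))) :
    ∀ j : ℕ, i₀ + 1 ≤ j →
      LinearMap.ker (bdry k (deltaM a m) j)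
        = LinearMap.range (bdry k (deltaM a m) (j + 1)) :=
  reduced_homology_vanishes_above_general k a m i₀ h
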